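/- In the random-sum setup, assume additionally that E[N³] < ∞. Then for every x ≥ 0, ∫_0^x ∫_y^∞ P(Z ≤ −z) dz dy ≤ E[N³] · ∫_0^x ∫_y^∞ max_{i∈E} Π_i((−∞, −z]) dz dy, where both sides take values in [0, ∞]. -/

import Mathlib

/-! With `Φₓ(t) = ∫₀ˣ (t - y)⁺ dy`, Tonelli turns `∫₀ˣ ∫_y^∞ μ(f ≤ -z) dz dy` into `∫ Φₓ(-f) dμ`.
So the left side is `E Φₓ(-Z)`, and every `E Φₓ(-X^{i,n})` is at most the double integral `M`
on the right. Splitting `y` evenly, `(∑_{n ≤ m} tₙ - y)⁺ ≤ ∑_{n ≤ m} (tₙ - y/m)⁺`, and the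
substitution `y = m u` gives `Φₓ(∑_{n ≤ m} tₙ) ≤ m ∑_{n ≤ m} Φₓ(tₙ)`. As `(Y, N)` is independent
of the family `X`, integrating over `X` first for fixed `(Y, N)` gives
`E Φₓ(-Z) ≤ E[N · N · M] ≤ E[N³] · M`. -/

open MeasureTheory Set

/-- The random-sum setup: a family `X i n` of independent real random variables with
`X i n ∼ law i`, an `E`-valued sequence `Y` and an `ℕ`-valued variable `N` such that
the pair `((Y n)ₙ, N)` is independent of the whole family `(X i n)`. -/
structure RandomSumSetup (E : Type*) [MeasurableSpace E] (Ω : Type*) [MeasurableSpace Ω]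
    (P : Measure Ω) (law : E → Measure ℝ) where
  X : E → ℕ → Ω → ℝ
  Y : ℕ → Ω → E
  N : Ω → ℕ
  measX : ∀ i n, Measurable (X i n)
  measY : ∀ n, Measurable (Y n)
  measN : Measurable N
  distX : ∀ i n, P.map (X i n) = law i
  indepX : ProbabilityTheory.iIndepFun (m := fun _ : E × ℕ => (inferInstance : MeasurableSpace ℝ))
    (fun p ω => X p.1 p.2 ω) P
  indepYN : ProbabilityTheory.IndepFun (fun ω => ((fun n => Y n ω), N ω))
    (fun ω (p : E × ℕ) => X p.1 p.2 ω) P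

/-- The random sum `Z = Σ_{n=1}^{N} X^{Y_n, n}` (empty sum `= 0`). -/
noncomputable def RandomSumSetup.Z {E : Type*} [MeasurableSpace E] {Ω : Type*}
    [MeasurableSpace Ω] {P : Measure Ω} {law : E → Measure ℝ}
    (S : RandomSumSetup E Ω P law) : Ω → ℝ :=
  fun ω => ∑ n ∈ Finset.Icc 1 (S.N ω), S.X (S.Y n ω) n ω

open scoped ENNReal

noncomputable def rampIntegral (x t : ℝ) : ℝ≥0∞ :=
  ∫⁻ y in Ioc (0 : ℝ) x, ENNReal.ofReal (t - y)

theorem measurable_rampIntegral (x : ℝ) : Measurable (rampIntegral x) :=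
  Measurable.lintegral_prod_right'
    (f := Function.uncurry fun t y : ℝ => ENNReal.ofReal (t - y))
    (measurable_fst.sub measurable_snd).ennreal_ofReal

section LayerCake

variable {α : Type*} [MeasurableSpace α] {μ : Measure α} [SFinite μ] {f : α → ℝ}

theorem lintegral_Ioi_measure_le_neg (hf : Measurable f) (y : ℝ) :
    ∫⁻ z in Ioi y, μ {a | f a ≤ -z} = ∫⁻ a, ENNReal.ofReal (-f a - y) ∂μ := by
  have hregion : MeasurableSet {p : ℝ × α | p.1 ≤ -f p.2} :=
    measurableSet_le measurable_fst (hf.comp measurable_snd).neg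
  have hsection : ∀ z,
      μ {a | f a ≤ -z} = ∫⁻ a, {p : ℝ × α | p.1 ≤ -f p.2}.indicator 1 (z, a) ∂μ := by
    intro z
    rw [← lintegral_indicator_one (s := {a | f a ≤ -z}) (hf measurableSet_Iic)]
    congr with a
    simp [indicator_apply, le_neg]
  simp_rw [hsection]
  rw [lintegral_lintegral_swap
    (f := fun z a => {p : ℝ × α | p.1 ≤ -f p.2}.indicator 1 (z, a))
    (measurable_one.indicator hregion).aemeasurable]
  congr with a
  have hslice : ∀ z, {p : ℝ × α | p.1 ≤ -f p.2}.indicator (1 : ℝ × α → ℝ≥0∞) (z, a) =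
      (Iic (-f a)).indicator 1 z := by
    simp [indicator_apply]
  simp_rw [hslice, lintegral_indicator_one measurableSet_Iic,
    Measure.restrict_apply measurableSet_Iic, Iic_inter_Ioi, Real.volume_Ioc]

theorem lintegral_Ioc_lintegral_Ioi_measure_le_neg (hf : Measurable f) (x : ℝ) :
    ∫⁻ y in Ioc (0 : ℝ) x, ∫⁻ z in Ioi y, μ {a | f a ≤ -z} =
      ∫⁻ a, rampIntegral x (-f a) ∂μ := by
  simp_rw [lintegral_Ioi_measure_le_neg hf]
  exact lintegral_lintegral_swap
    ((hf.comp measurable_snd).neg.sub measurable_fst).ennreal_ofReal.aemeasurable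

end LayerCake

theorem ENNReal.ofReal_sum_le {ι : Type*} (s : Finset ι) (f : ι → ℝ) :
    ENNReal.ofReal (∑ i ∈ s, f i) ≤ ∑ i ∈ s, ENNReal.ofReal (f i) := by
  classical
  induction s using Finset.induction_on with
  | empty => simp
  | insert i s hi ih =>
    rw [Finset.sum_insert hi, Finset.sum_insert hi]
    exact ENNReal.ofReal_add_le.trans (add_le_add_right ih _)

theorem ofReal_sum_sub_le_sum_ofReal_sub_div (m : ℕ) (t : ℕ → ℝ) {y : ℝ} (hy : 0 ≤ y) :
    ENNReal.ofReal (∑ n ∈ Finset.Icc 1 m, t n - y) ≤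
      ∑ n ∈ Finset.Icc 1 m, ENNReal.ofReal (t n - y / m) := by
  rcases m.eq_zero_or_pos with rfl | hm
  · simp [hy]
  · have hsplit : ∑ n ∈ Finset.Icc 1 m, t n - y = ∑ n ∈ Finset.Icc 1 m, (t n - y / m) := by
      rw [Finset.sum_sub_distrib, Finset.sum_const, Nat.card_Icc, Nat.add_sub_cancel,
        nsmul_eq_mul, mul_div_cancel₀ _ (by positivity)]
    rw [hsplit]
    exact ENNReal.ofReal_sum_le _ _

theorem lintegral_Ioc_ofReal_sub_div_le {x c : ℝ} (hx : 0 ≤ x) (hc : 1 ≤ c) (a : ℝ) :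
    ∫⁻ y in Ioc (0 : ℝ) x, ENNReal.ofReal (a - y / c) ≤ ENNReal.ofReal c * rampIntegral x a := by
  have hc₀ : 0 < c := zero_lt_one.trans_le hc
  have himage : (c * ·) '' Ioc 0 (x / c) = Ioc 0 x := by
    rw [image_mul_left_Ioc hc₀, mul_zero, mul_div_cancel₀ _ hc₀.ne']
  calc ∫⁻ y in Ioc (0 : ℝ) x, ENNReal.ofReal (a - y / c)
      = ∫⁻ u in Ioc 0 (x / c), ENNReal.ofReal |c| * ENNReal.ofReal (a - c * u / c) := by
        rw [← himage]
        exact lintegral_image_eq_lintegral_abs_deriv_mul measurableSet_Ioc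
          (fun u _ => ((hasDerivAt_id u).const_mul c).hasDerivWithinAt.congr_deriv (mul_one c))
          (mul_right_injective₀ hc₀.ne').injOn _
    _ = ENNReal.ofReal c * ∫⁻ u in Ioc 0 (x / c), ENNReal.ofReal (a - u) := by
        simp_rw [abs_of_pos hc₀, mul_div_cancel_left₀ _ hc₀.ne']
        exact lintegral_const_mul _ (measurable_const.sub measurable_id).ennreal_ofReal
    _ ≤ ENNReal.ofReal c * rampIntegral x a := by
        gcongr
        exact lintegral_mono_set (Ioc_subset_Ioc_right (div_le_self hx hc))

theorem rampIntegral_sum_le {x : ℝ} (hx : 0 ≤ x) (m : ℕ) (t : ℕ → ℝ) :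
    rampIntegral x (∑ n ∈ Finset.Icc 1 m, t n) ≤
      m * ∑ n ∈ Finset.Icc 1 m, rampIntegral x (t n) := by
  calc rampIntegral x (∑ n ∈ Finset.Icc 1 m, t n)
      ≤ ∫⁻ y in Ioc (0 : ℝ) x, ∑ n ∈ Finset.Icc 1 m, ENNReal.ofReal (t n - y / m) :=
        setLIntegral_mono' measurableSet_Ioc fun y hy =>
          ofReal_sum_sub_le_sum_ofReal_sub_div m t hy.1.le
    _ = ∑ n ∈ Finset.Icc 1 m, ∫⁻ y in Ioc (0 : ℝ) x, ENNReal.ofReal (t n - y / m) :=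
        lintegral_finsetSum _ fun n _ =>
          (measurable_const.sub (measurable_id.div_const _)).ennreal_ofReal
    _ ≤ ∑ n ∈ Finset.Icc 1 m, m * rampIntegral x (t n) := by
        gcongr with n hn
        have hm : (1 : ℝ) ≤ m := by
          exact_mod_cast (Finset.mem_Icc.mp hn).1.trans (Finset.mem_Icc.mp hn).2
        rw [← ENNReal.ofReal_natCast]
        exact lintegral_Ioc_ofReal_sub_div_le hx hm _
    _ = m * ∑ n ∈ Finset.Icc 1 m, rampIntegral x (t n) := (Finset.mul_sum ..).symm

theorem ProbabilityTheory.IndepFun.lintegral_comp_eq_lintegral_lintegral {Ω β γ : Type*}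
    [MeasurableSpace Ω] [MeasurableSpace β] [MeasurableSpace γ] {μ : Measure Ω}
    [IsFiniteMeasure μ] {f : Ω → β} {g : Ω → γ} (hfg : IndepFun f g μ) (hf : Measurable f)
    (hg : Measurable g) {G : β × γ → ℝ≥0∞} (hG : Measurable G) :
    ∫⁻ ω, G (f ω, g ω) ∂μ = ∫⁻ b, ∫⁻ c, G (b, c) ∂(μ.map g) ∂(μ.map f) := by
  rw [← lintegral_prod _ hG.aemeasurable,
    ← hfg.map_prod_eq_prod_map_map hf.aemeasurable hg.aemeasurable,
    lintegral_map hG (hf.prodMk hg)]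

theorem measurable_of_countable_index {α ι γ : Type*} [MeasurableSpace α] [MeasurableSpace ι]
    [Countable ι] [MeasurableSingletonClass ι] [MeasurableSpace γ] {F : ι → α → γ}
    (hF : ∀ i, Measurable (F i)) {k : α → ι} (hk : Measurable k) :
    Measurable fun a => F (k a) a :=
  (measurable_from_prod_countable_right (f := fun q : ι × α => F q.1 q.2) hF).comp
    (hk.prodMk measurable_id)

theorem lintegral_sum_comp_apply_le {ι κ β : Type*} [MeasurableSpace β] {ν : Measure (ι → β)}
    {φ : β → ℝ≥0∞} (hφ : Measurable φ) {M : ℝ≥0∞} (hM : ∀ i, ∫⁻ v, φ (v i) ∂ν ≤ M)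
    (s : Finset κ) (e : κ → ι) :
    ∫⁻ v, ∑ k ∈ s, φ (v (e k)) ∂ν ≤ s.card * M := by
  rw [← nsmul_eq_mul]
  refine (lintegral_finsetSum s fun k _ => hφ.comp (measurable_pi_apply (e k))).trans_le ?_
  exact Finset.sum_le_card_nsmul _ _ _ fun k _ => hM (e k)

namespace RandomSumSetup

variable {E : Type*} [MeasurableSpace E] {Ω : Type*} [MeasurableSpace Ω] {P : Measure Ω}
  {law : E → Measure ℝ} (S : RandomSumSetup E Ω P law)

theorem rampIntegral_neg_Z_le {x : ℝ} (hx : 0 ≤ x) (ω : Ω) :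
    rampIntegral x (-S.Z ω) ≤
      S.N ω * ∑ n ∈ Finset.Icc 1 (S.N ω), rampIntegral x (-S.X (S.Y n ω) n ω) := by
  rw [RandomSumSetup.Z, ← Finset.sum_neg_distrib]
  exact rampIntegral_sum_le hx _ _

theorem lintegral_rampIntegral_neg_X [SFinite P] (x : ℝ) (i : E) (n : ℕ) :
    ∫⁻ ω, rampIntegral x (-S.X i n ω) ∂P =
      ∫⁻ y in Ioc (0 : ℝ) x, ∫⁻ z in Ioi y, law i (Iic (-z)) := by
  rw [← lintegral_Ioc_lintegral_Ioi_measure_le_neg (S.measX i n), ← S.distX i n]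
  simp_rw [Measure.map_apply (S.measX i n) measurableSet_Iic]
  rfl

variable [Countable E] [MeasurableSingletonClass E]

theorem measurable_Z : Measurable S.Z :=
  measurable_of_countable_index (k := S.N) (fun _ => Finset.measurable_sum _ fun n _ =>
    measurable_of_countable_index (fun i => S.measX i n) (S.measY n)) S.measN

theorem lintegral_mul_sum_le [IsFiniteMeasure P] (h : ℕ → ℝ≥0∞) {φ : ℝ → ℝ≥0∞}
    (hφ : Measurable φ) {M : ℝ≥0∞} (hM : ∀ i n, ∫⁻ ω, φ (S.X i n ω) ∂P ≤ M) :
    ∫⁻ ω, h (S.N ω) * ∑ n ∈ Finset.Icc 1 (S.N ω), φ (S.X (S.Y n ω) n ω) ∂P ≤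
      ∫⁻ ω, h (S.N ω) * (S.N ω * M) ∂P := by
  have hlabels : Measurable fun ω => ((fun n => S.Y n ω), S.N ω) :=
    (measurable_pi_lambda _ S.measY).prodMk S.measN
  have hjumps : Measurable fun ω (p : E × ℕ) => S.X p.1 p.2 ω :=
    measurable_pi_lambda _ fun p => S.measX p.1 p.2
  have heval : ∀ n, Measurable fun q : ((ℕ → E) × ℕ) × (E × ℕ → ℝ) => q.2 (q.1.1 n, n) :=
    fun n => measurable_of_countable_index (α := ((ℕ → E) × ℕ) × (E × ℕ → ℝ))
      (F := fun p q => q.2 p) (fun p => (measurable_pi_apply p).comp measurable_snd)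
      (((measurable_pi_apply n).comp measurable_fst.fst).prodMk measurable_const)
  have hG : Measurable fun q : ((ℕ → E) × ℕ) × (E × ℕ → ℝ) =>
      h q.1.2 * ∑ n ∈ Finset.Icc 1 q.1.2, φ (q.2 (q.1.1 n, n)) :=
    measurable_of_countable_index (α := ((ℕ → E) × ℕ) × (E × ℕ → ℝ))
      (F := fun m q => h m * ∑ n ∈ Finset.Icc 1 m, φ (q.2 (q.1.1 n, n)))
      (fun m => measurable_const.mul (Finset.measurable_sum _ fun n _ => hφ.comp (heval n)))
      measurable_fst.snd
  have hjump_bound : ∀ p, ∫⁻ v, φ (v p) ∂(P.map fun ω (p : E × ℕ) => S.X p.1 p.2 ω) ≤ M :=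
    fun p => by
      rw [lintegral_map (f := fun v : E × ℕ → ℝ => φ (v p))
        (hφ.comp (measurable_pi_apply p)) hjumps]
      exact hM p.1 p.2
  rw [S.indepYN.lintegral_comp_eq_lintegral_lintegral hlabels hjumps hG,
    ← lintegral_map (f := fun w : (ℕ → E) × ℕ => h w.2 * (w.2 * M))
      ((Measurable.of_discrete (f := fun m : ℕ => h m * (m * M))).comp measurable_snd) hlabels]
  refine lintegral_mono fun w => ?_
  dsimp only
  rw [lintegral_const_mul _ (Finset.measurable_sum (f := fun n (v : E × ℕ → ℝ) => φ (v (w.1 n, n)))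
    _ fun n _ => hφ.comp (measurable_pi_apply _))]
  gcongr
  simpa using lintegral_sum_comp_apply_le hφ hjump_bound (Finset.Icc 1 w.2) fun n => (w.1 n, n)

end RandomSumSetup

theorem randomSum_double_integral_bound_general {E : Type*} [Fintype E]
    [MeasurableSpace E] [MeasurableSingletonClass E] {Ω : Type*} [MeasurableSpace Ω]
    (P : Measure Ω) [IsProbabilityMeasure P] (law : E → Measure ℝ)
    (S : RandomSumSetup E Ω P law) (x : ℝ) (hx : 0 ≤ x) :
    (∫⁻ y in Ioc (0 : ℝ) x, ∫⁻ z in Ioi y, P {ω | S.Z ω ≤ -z}) ≤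
      (∫⁻ ω, (S.N ω : ENNReal) ^ 3 ∂P) *
        ∫⁻ y in Ioc (0 : ℝ) x, ∫⁻ z in Ioi y, ⨆ i, law i (Iic (-z)) := by
  set M := ∫⁻ y in Ioc (0 : ℝ) x, ∫⁻ z in Ioi y, ⨆ i, law i (Iic (-z))
  have hX : ∀ i n, ∫⁻ ω, rampIntegral x (-S.X i n ω) ∂P ≤ M := fun i n => by
    rw [S.lintegral_rampIntegral_neg_X]
    exact lintegral_mono fun y => lintegral_mono fun z => le_iSup (fun i => law i (Iic (-z))) i
  have hsq_le_cube : ∀ m : ℕ, (m : ℝ≥0∞) * (m * M) ≤ (m : ℝ≥0∞) ^ 3 * M := fun m => by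
    rw [← mul_assoc, ← sq]
    refine mul_le_mul_left ?_ M
    rcases m.eq_zero_or_pos with rfl | hm
    · simp
    · exact pow_le_pow_right₀ (Nat.one_le_cast.mpr hm) (by norm_num)
  rw [lintegral_Ioc_lintegral_Ioi_measure_le_neg S.measurable_Z]
  calc ∫⁻ ω, rampIntegral x (-S.Z ω) ∂P
      ≤ ∫⁻ ω, S.N ω * ∑ n ∈ Finset.Icc 1 (S.N ω), rampIntegral x (-S.X (S.Y n ω) n ω) ∂P :=
        lintegral_mono (S.rampIntegral_neg_Z_le hx)
    _ ≤ ∫⁻ ω, S.N ω * (S.N ω * M) ∂P :=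
        S.lintegral_mul_sum_le _ ((measurable_rampIntegral x).comp measurable_neg) hX
    _ ≤ ∫⁻ ω, (S.N ω : ℝ≥0∞) ^ 3 * M ∂P := lintegral_mono fun ω => hsq_le_cube (S.N ω)
    _ = (∫⁻ ω, (S.N ω : ℝ≥0∞) ^ 3 ∂P) * M :=
        lintegral_mul_const _ ((Measurable.of_discrete.comp S.measN).pow_const 3)

/-- In the random-sum setup, if `E[N³] < ∞`, then for every `x ≥ 0`,
`∫_0^x ∫_y^∞ P(Z ≤ −z) dz dy ≤ E[N³] · ∫_0^x ∫_y^∞ max_i Π_i((−∞,−z]) dz dy`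
(with both sides valued in `[0,∞]`). -/
theorem randomSum_double_integral_bound {E : Type*} [Fintype E] [Nonempty E]
    [MeasurableSpace E] [MeasurableSingletonClass E] {Ω : Type*} [MeasurableSpace Ω]
    (P : Measure Ω) [IsProbabilityMeasure P] (law : E → Measure ℝ)
    (hlaw : ∀ i, IsProbabilityMeasure (law i)) (S : RandomSumSetup E Ω P law)
    (hN3 : (∫⁻ ω, (S.N ω : ENNReal) ^ 3 ∂P) < ⊤) (x : ℝ) (hx : 0 ≤ x) :
    (∫⁻ y in Ioc (0 : ℝ) x, ∫⁻ z in Ioi y, P {ω | S.Z ω ≤ -z}) ≤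
      (∫⁻ ω, (S.N ω : ENNReal) ^ 3 ∂P) *
        ∫⁻ y in Ioc (0 : ℝ) x, ∫⁻ z in Ioi y, ⨆ i, law i (Iic (-z)) :=
  randomSum_double_integral_bound_general P law S x hx
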